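/- The 3-CNF formula C is satisfiable if and only if there exists a simple path from u_0 to u_m in H_m such that for every pair of contradictory occurrences o and o', at most one of the two literal edges corresponding to o and o' lies on the path. (Equivalently: the minmax shortest path value of the constructed instance is at most 1 if C is satisfiable and at least 2 otherwise.) -/

import Mathlib

/-!
A path from `u_0` to `u_m` in `H_m` has to pass, for every clause `i`, from `u_i` to some literal
vertex `w_{i,j}`, i.e. it selects an occurrence in every clause; conversely any selection `i ↦ j i`
is realised by a path that uses no other literal edge. The condition on contradictory occurrences
says exactly that the selected literals are consistent, and consistent literals, one per clause,
are precisely what a satisfying assignment provides.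
-/

/-- Vertex type of the path graph `H_m`: hub vertices `u_k = Sum.inl k` for
`k : Fin (m+1)` and literal vertices `w_{i,j} = Sum.inr (i, j)`. -/
abbrev Vpath (m : ℕ) := Fin (m + 1) ⊕ (Fin m × Fin 3)

/-- The series-parallel graph `H_m` whose edges are the literal edges `u_i — w_{i,j}`
and the dummy edges `w_{i,j} — u_{i+1}` for `i : Fin m`, `j : Fin 3`. -/
def Hm (m : ℕ) : SimpleGraph (Vpath m) :=
  SimpleGraph.fromEdgeSet {e : Sym2 (Vpath m) | ∃ i : Fin m, ∃ j : Fin 3,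
    e = s(Sum.inl i.castSucc, Sum.inr (i, j)) ∨
    e = s(Sum.inr (i, j), Sum.inl i.succ)}

open SimpleGraph

theorem exists_assignment_of_consistent {ι α : Type*} (L : ι → α × Bool)
    (hL : ∀ k k', (L k).1 = (L k').1 → (L k).2 = (L k').2) :
    ∃ a : α → Bool, ∀ k, a (L k).1 = (L k).2 := by
  classical
  refine ⟨fun v => decide (∃ k, L k = (v, true)), fun k => ?_⟩
  cases hk : (L k).2
  · refine decide_eq_false fun ⟨k', hk'⟩ => ?_
    simpa [hk', hk] using hL k' k (by rw [hk'])
  · exact decide_eq_true ⟨k, Prod.ext rfl hk⟩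

namespace Hm

variable {m : ℕ}

def level : Vpath m → ℕ := Sum.elim (fun k => 2 * k.val) (fun p => 2 * p.1.val + 1)

theorem eq_literal_of_adj {x y : Vpath m} (h : (Hm m).Adj x y) {i : Fin m}
    (hx : level x ≤ 2 * i) (hy : 2 * i < level y) :
    ∃ j, x = Sum.inl i.castSucc ∧ y = Sum.inr (i, j) := by
  rw [Hm, fromEdgeSet_adj] at h
  obtain ⟨⟨i', j, he | he⟩, -⟩ := h <;> rw [Sym2.eq_iff] at he <;>
    rcases he with ⟨rfl, rfl⟩ | ⟨rfl, rfl⟩ <;>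
    simp only [level, Sum.elim_inl, Sum.elim_inr, Fin.val_castSucc, Fin.val_succ] at hx hy
  · obtain rfl : i' = i := Fin.ext (by omega)
    exact ⟨j, rfl, rfl⟩
  all_goals omega

theorem exists_literal_edge_mem_edges (p : (Hm m).Walk (Sum.inl 0) (Sum.inl (Fin.last m)))
    (i : Fin m) : ∃ j, s(Sum.inl i.castSucc, Sum.inr (i, j)) ∈ p.edges := by
  -- `p` must leave `{v | level v ≤ 2 * i}`, and only the literal edges of clause `i` do so.
  obtain ⟨d, hd, hfst, hsnd⟩ :=
    p.exists_boundary_dart {v | level v ≤ 2 * i} (by simp [level]) (by simp [level])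
  obtain ⟨j, hx, hy⟩ := eq_literal_of_adj d.adj hfst (not_le.mp hsnd)
  refine ⟨j, ?_⟩
  rw [← hx, ← hy]
  exact List.mem_map_of_mem hd

def selected (js : Fin m → Fin 3) : SimpleGraph (Vpath m) :=
  fromEdgeSet {e | ∃ i : Fin m,
    e = s(Sum.inl i.castSucc, Sum.inr (i, js i)) ∨ e = s(Sum.inr (i, js i), Sum.inl i.succ)}

theorem selected_le (js : Fin m → Fin 3) : selected js ≤ Hm m :=
  fromEdgeSet_mono fun _ ⟨i, he⟩ => ⟨i, js i, he⟩

theorem selected_reachable (js : Fin m → Fin 3) :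
    (selected js).Reachable (Sum.inl 0) (Sum.inl (Fin.last m)) := by
  suffices ∀ k, (selected js).Reachable (Sum.inl 0) (Sum.inl k) from this _
  intro k
  induction k using Fin.induction with
  | zero => rfl
  | succ i ih =>
    have literal : (selected js).Adj (Sum.inl i.castSucc) (Sum.inr (i, js i)) :=
      (fromEdgeSet_adj _).mpr ⟨⟨i, Or.inl rfl⟩, Sum.inl_ne_inr⟩
    have dummy : (selected js).Adj (Sum.inr (i, js i)) (Sum.inl i.succ) :=
      (fromEdgeSet_adj _).mpr ⟨⟨i, Or.inr rfl⟩, Sum.inr_ne_inl⟩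
    exact ih.trans (literal.reachable.trans dummy.reachable)

theorem eq_of_literal_edge_mem_selected {js : Fin m → Fin 3} {i : Fin m} {j : Fin 3}
    (h : s(Sum.inl i.castSucc, Sum.inr (i, j)) ∈ (selected js).edgeSet) : j = js i := by
  rw [selected, edgeSet_fromEdgeSet] at h
  obtain ⟨⟨i', he | he⟩, -⟩ := h <;> rw [Sym2.eq_iff] at he
  · simp only [Sum.inl.injEq, Sum.inr.injEq, Prod.mk.injEq, reduceCtorEq, false_and,
      or_false] at he
    obtain ⟨-, rfl, rfl⟩ := he
    rfl
  · simp only [Sum.inl.injEq, Sum.inr.injEq, Prod.mk.injEq, reduceCtorEq, false_and,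
      false_or] at he
    obtain ⟨hi, rfl, -⟩ := he
    exact absurd (congrArg Fin.val hi) (by simp)

theorem exists_isPath_edges_subset_selected (js : Fin m → Fin 3) :
    ∃ p : (Hm m).Walk (Sum.inl 0) (Sum.inl (Fin.last m)),
      p.IsPath ∧ ∀ e ∈ p.edges, e ∈ (selected js).edgeSet := by
  obtain ⟨q⟩ := selected_reachable js
  refine ⟨q.bypass.mapLe (selected_le js), q.bypass_isPath.mapLe _, fun e he => ?_⟩
  rw [Walk.edges_mapLe_eq_edges] at he
  exact q.bypass.edges_subset_edgeSet he

end Hm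

/-- The 3-CNF formula `C` is satisfiable iff there is a simple path from
`u_0` to `u_m` in `H_m` such that for every pair of contradictory occurrences, at most
one of the two corresponding literal edges lies on the path. -/
theorem threeSat_iff_path (n m : ℕ) (C : Fin m → Fin 3 → Fin n × Bool) :
    (∃ a : Fin n → Bool, ∀ i : Fin m, ∃ j : Fin 3, a (C i j).1 = (C i j).2) ↔
    (∃ p : (Hm m).Walk (Sum.inl 0) (Sum.inl (Fin.last m)), p.IsPath ∧
      ∀ (i i' : Fin m) (j j' : Fin 3),
        ((i, j) : Fin m × Fin 3) ≠ (i', j') →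
        (C i j).1 = (C i' j').1 → (C i j).2 ≠ (C i' j').2 →
        ¬(s(Sum.inl i.castSucc, Sum.inr (i, j)) ∈ p.edges ∧
          s(Sum.inl i'.castSucc, Sum.inr (i', j')) ∈ p.edges)) := by
  constructor
  · rintro ⟨a, ha⟩
    choose js hjs using ha
    obtain ⟨p, hp, hedges⟩ := Hm.exists_isPath_edges_subset_selected js
    refine ⟨p, hp, fun i i' j j' _ hvar hsign ⟨hi, hi'⟩ => hsign ?_⟩
    obtain rfl := Hm.eq_of_literal_edge_mem_selected (hedges _ hi)
    obtain rfl := Hm.eq_of_literal_edge_mem_selected (hedges _ hi')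
    rw [← hjs i, ← hjs i', hvar]
  · rintro ⟨p, -, hp⟩
    choose js hjs using Hm.exists_literal_edge_mem_edges p
    obtain ⟨a, ha⟩ := exists_assignment_of_consistent (fun i => C i (js i)) fun i i' hvar => by
      by_contra hsign
      refine hp i i' (js i) (js i') (fun h => hsign ?_) hvar hsign ⟨hjs i, hjs i'⟩
      rw [(Prod.mk.inj h).1]
    exact ⟨a, fun i => ⟨js i, ha i⟩⟩
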